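/- Let $S$ be a module over the Clifford algebra of a quadratic form, let $E_0$ be a symmetric bilinear form (the Einstein tensor term) and suppose that for a nonzero spinor $\epsilon$ and all tangent vectors $v$ the integrability identity $\iota_v E_0 \cdot \epsilon - \frac{1}{36} v^\flat \wedge (\ast F_0)\cdot\epsilon + \frac{1}{6}\iota_v(\ast F_0)\cdot \epsilon = 0$ holds with $F_0 = 0$. If Clifford multiplication by any nonzero one-form acts injectively on the span of $\epsilon$ only when the one-form is non-null, and the vector field $\xi$ defined by $\xi(v) = \omega(\epsilon, v\cdot\epsilon)$ is timelike, then $E_0 = 0$. -/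

import Mathlib

/-!
With `F₀ = 0` the integrability identity says that the vector `u = (ι_v E₀)♯` annihilates `ε`.
Injectivity of Clifford multiplication by non-null vectors forces `u` to be null, and
`ξ(u) = ω(ε, u·ε) = 0` makes it orthogonal to the timelike Dirac current `ξ`; in Lorentzian
signature such a vector vanishes, so `ι_v E₀ = 0` for every `v`.
-/

theorem LinearMap.apply_ne_zero_of_injective_smul {S T : Type*} [AddCommGroup S] [Module ℝ S]
    [AddCommGroup T] [Module ℝ T] (f : S →ₗ[ℝ] T) {ε : S}
    (hinj : Function.Injective fun c : ℝ => f (c • ε)) : f ε ≠ 0 := by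
  intro hf
  have : (1 : ℝ) = 0 := hinj (by simp [hf])
  exact one_ne_zero this

section DiracCurrent

variable {V S : Type*} [AddCommGroup V] [Module ℝ V] [AddCommGroup S] [Module ℝ S]
  {Q : QuadraticForm ℝ V} {act : ExteriorAlgebra ℝ V →ₗ[ℝ] Module.End ℝ S} {ε : S}

theorem isotropic_of_act_eq_zero
    (hinj : ∀ θ : V, Q θ ≠ 0 →
      Function.Injective fun c : ℝ => act (ExteriorAlgebra.ι ℝ θ) (c • ε))
    {u : V} (hu : act (ExteriorAlgebra.ι ℝ u) ε = 0) : Q u = 0 := by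
  by_contra hQ
  exact (act (ExteriorAlgebra.ι ℝ u)).apply_ne_zero_of_injective_smul (hinj u hQ) hu

theorem polar_diracCurrent_eq_zero_of_act_eq_zero {ω : S →ₗ[ℝ] S →ₗ[ℝ] ℝ} {ξ : V}
    (hξ : ∀ v : V, QuadraticMap.polar Q ξ v = ω ε (act (ExteriorAlgebra.ι ℝ v) ε))
    {u : V} (hu : act (ExteriorAlgebra.ι ℝ u) ε = 0) : QuadraticMap.polar Q ξ u = 0 := by
  rw [hξ u, hu, map_zero]

theorem eq_zero_of_act_eq_zero {ω : S →ₗ[ℝ] S →ₗ[ℝ] ℝ} {ξ : V}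
    (hLorentz : ∀ u w : V, 0 < Q u → Q w = 0 → QuadraticMap.polar Q u w = 0 → w = 0)
    (hinj : ∀ θ : V, Q θ ≠ 0 →
      Function.Injective fun c : ℝ => act (ExteriorAlgebra.ι ℝ θ) (c • ε))
    (hξ : ∀ v : V, QuadraticMap.polar Q ξ v = ω ε (act (ExteriorAlgebra.ι ℝ v) ε))
    (htimelike : 0 < Q ξ) {u : V} (hu : act (ExteriorAlgebra.ι ℝ u) ε = 0) : u = 0 :=
  hLorentz ξ u htimelike (isotropic_of_act_eq_zero hinj hu)
    (polar_diracCurrent_eq_zero_of_act_eq_zero hξ hu)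

end DiracCurrent

theorem stmt_18_general (V S : Type*) [AddCommGroup V] [Module ℝ V]
    [AddCommGroup S] [Module ℝ S]
    (Q : QuadraticForm ℝ V)
    -- the Clifford action of exterior forms on spinors
    (act : ExteriorAlgebra ℝ V →ₗ[ℝ] Module.End ℝ S)
    -- the interior product ι_v on exterior forms
    (contr : V →ₗ[ℝ] ExteriorAlgebra ℝ V →ₗ[ℝ] ExteriorAlgebra ℝ V)
    -- the musical isomorphism (nondegeneracy of the metric)
    (sharp : (V →ₗ[ℝ] ℝ) ≃ₗ[ℝ] V)
    -- Lorentzian signature: a null vector orthogonal to a timelike vector is zero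
    (hLorentz : ∀ u w : V, 0 < Q u → Q w = 0 → QuadraticMap.polar Q u w = 0 → w = 0)
    -- the symplectic pairing on spinors
    (ω : S →ₗ[ℝ] S →ₗ[ℝ] ℝ)
    -- the symmetric bilinear form E₀ (Einstein tensor) and the Maxwell data ∗F₀
    (E0 : V →ₗ[ℝ] V →ₗ[ℝ] ℝ)
    (SF0 : ExteriorAlgebra ℝ V)
    -- the nonzero supersymmetry spinor
    (ε : S)
    -- the integrability identity of the Killing spinor equation
    (hident : ∀ v : V,
      act (ExteriorAlgebra.ι ℝ (sharp (E0 v))) ε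
        - (1 / 36 : ℝ) • act (ExteriorAlgebra.ι ℝ v * SF0) ε
        + (1 / 6 : ℝ) • act (contr v SF0) ε = 0)
    -- the Maxwell equation: F₀ = 0
    (hF0 : SF0 = 0)
    -- Clifford multiplication by non-null one-forms is injective on span ε
    (hinj : ∀ θ : V, Q θ ≠ 0 →
      Function.Injective fun c : ℝ => act (ExteriorAlgebra.ι ℝ θ) (c • ε))
    -- the Dirac current ξ, ξ(v) = ω(ε, v·ε), is timelike
    (ξ : V)
    (hξ : ∀ v : V, QuadraticMap.polar Q ξ v = ω ε (act (ExteriorAlgebra.ι ℝ v) ε))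
    (htimelike : 0 < Q ξ) :
    E0 = 0 := by
  refine LinearMap.ext fun v => ?_
  have hannihilates : act (ExteriorAlgebra.ι ℝ (sharp (E0 v))) ε = 0 := by
    simpa [hF0] using hident v
  have hsharp_zero : sharp (E0 v) = 0 :=
    eq_zero_of_act_eq_zero hLorentz hinj hξ htimelike hannihilates
  exact sharp.map_eq_zero_iff.mp hsharp_zero

/-- after Gauntlett–Pakis: in a Clifford module `S` for the Clifford
algebra of a (Lorentzian) quadratic form `Q`, if the Killing-spinor integrability
identity `ι_v E₀ · ε − (1/36) v♭ ∧ (∗F₀) · ε + (1/6) ι_v(∗F₀) · ε = 0` holds for a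
nonzero spinor `ε` and all `v`, with `F₀ = 0`, Clifford multiplication by non-null
one-forms is injective on the span of `ε`, and the vector `ξ` defined by
`ξ(v) = ω(ε, v·ε)` is timelike, then the Einstein tensor `E₀` vanishes.

Forms act on spinors through `act : Λ•V → End S`, extending the Clifford action of
vectors (`hact`); one-forms are identified with vectors via the musical isomorphism
`sharp` of the (nondegenerate) polar form of `Q`; `contr` is the interior-product
datum and `SF0` represents `∗F₀`; `hLorentz` expresses that `Q` has Lorentzian
signature (a null vector orthogonal to a timelike vector vanishes). -/
theorem stmt_18 (V S : Type*) [AddCommGroup V] [Module ℝ V]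
    [AddCommGroup S] [Module ℝ S]
    (Q : QuadraticForm ℝ V)
    [Module (CliffordAlgebra Q) S] [IsScalarTower ℝ (CliffordAlgebra Q) S]
    -- the Clifford action of exterior forms on spinors
    (act : ExteriorAlgebra ℝ V →ₗ[ℝ] Module.End ℝ S)
    (hact : ∀ (v : V) (s : S),
      act (ExteriorAlgebra.ι ℝ v) s = (CliffordAlgebra.ι Q v) • s)
    -- the interior product ι_v on exterior forms
    (contr : V →ₗ[ℝ] ExteriorAlgebra ℝ V →ₗ[ℝ] ExteriorAlgebra ℝ V)
    -- the musical isomorphism (nondegeneracy of the metric)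
    (sharp : (V →ₗ[ℝ] ℝ) ≃ₗ[ℝ] V)
    (hsharp : ∀ (θ : V →ₗ[ℝ] ℝ) (w : V), QuadraticMap.polar Q (sharp θ) w = θ w)
    -- Lorentzian signature: a null vector orthogonal to a timelike vector is zero
    (hLorentz : ∀ u w : V, 0 < Q u → Q w = 0 → QuadraticMap.polar Q u w = 0 → w = 0)
    -- the symplectic pairing on spinors
    (ω : S →ₗ[ℝ] S →ₗ[ℝ] ℝ) (hω : ∀ s t : S, ω s t = - ω t s)
    -- the symmetric bilinear form E₀ (Einstein tensor) and the Maxwell data ∗F₀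
    (E0 : V →ₗ[ℝ] V →ₗ[ℝ] ℝ) (hE0symm : ∀ v w, E0 v w = E0 w v)
    (SF0 : ExteriorAlgebra ℝ V)
    -- the nonzero supersymmetry spinor
    (ε : S) (hε : ε ≠ 0)
    -- the integrability identity of the Killing spinor equation
    (hident : ∀ v : V,
      act (ExteriorAlgebra.ι ℝ (sharp (E0 v))) ε
        - (1 / 36 : ℝ) • act (ExteriorAlgebra.ι ℝ v * SF0) ε
        + (1 / 6 : ℝ) • act (contr v SF0) ε = 0)
    -- the Maxwell equation: F₀ = 0
    (hF0 : SF0 = 0)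
    -- Clifford multiplication by non-null one-forms is injective on span ε
    (hinj : ∀ θ : V, Q θ ≠ 0 →
      Function.Injective fun c : ℝ => act (ExteriorAlgebra.ι ℝ θ) (c • ε))
    -- the Dirac current ξ, ξ(v) = ω(ε, v·ε), is timelike
    (ξ : V)
    (hξ : ∀ v : V, QuadraticMap.polar Q ξ v = ω ε (act (ExteriorAlgebra.ι ℝ v) ε))
    (htimelike : 0 < Q ξ) :
    E0 = 0 :=
  stmt_18_general V S Q act contr sharp hLorentz ω E0 SF0 ε hident hF0 hinj ξ hξ htimelike
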